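/- arXiv:2401.01353 — 6 statements merged into one kernel-verified Lean document; each statement's English description precedes it below -/
import Mathlib

section
/- Binding of Pedersen commitments reduces to discrete log: if m0·G + r0·H = m1·G + r1·H with m0 ≠ m1 in Z_q (q prime), then H = ((m0 - m1)/(r1 - r0))·G, i.e., the discrete logarithm of H to base G is (m0 - m1)·(r1 - r0)⁻¹, and in particular r0 ≠ r1 provided G ≠ 0. -/
section Ring

variable {R M : Type*} [Ring R] [AddCommGroup M] [Module R M]

theorem sub_smul_eq_sub_smul_of_add_smul_eq {g h : M} {m0 m1 r0 r1 : R}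
    (heq : m0 • g + r0 • h = m1 • g + r1 • h) : (m0 - m1) • g = (r1 - r0) • h := by
  rw [sub_smul, sub_smul, sub_eq_sub_iff_add_eq_add, heq, add_comm]

end Ring

section DivisionRing

variable {K M : Type*} [DivisionRing K] [AddCommGroup M] [Module K M]

theorem ne_zero_of_smul_eq_smul {g h : M} {a b : K} (hg : g ≠ 0) (ha : a ≠ 0)
    (hab : a • g = b • h) : b ≠ 0 := by
  rintro rfl
  rw [zero_smul] at hab
  exact smul_ne_zero ha hg hab

end DivisionRing

section Field

variable {K M : Type*} [Field K] [AddCommGroup M] [Module K M]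

theorem eq_div_smul_of_smul_eq_smul {g h : M} {a b : K} (hb : b ≠ 0) (hab : a • g = b • h) :
    h = (a / b) • g := by
  rw [div_eq_mul_inv, mul_comm, mul_smul, hab, smul_smul, inv_mul_cancel₀ hb, one_smul]

end Field

theorem pedersen_binding_dlog_general (q : ℕ) [Fact q.Prime]
    (G : Type*) [AddCommGroup G] [Module (ZMod q) G] (g h : G)
    (hg : g ≠ 0)
    (m0 m1 r0 r1 : ZMod q)
    (heq : m0 • g + r0 • h = m1 • g + r1 • h)
    (hm : m0 ≠ m1) :
    r0 ≠ r1 ∧ h = ((m0 - m1) / (r1 - r0)) • g := by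
  have key := sub_smul_eq_sub_smul_of_add_smul_eq heq
  have hr : r1 - r0 ≠ 0 := ne_zero_of_smul_eq_smul hg (sub_ne_zero.mpr hm) key
  exact ⟨(sub_ne_zero.mp hr).symm, eq_div_smul_of_smul_eq_smul hr key⟩

/-- Binding of Pedersen commitments reduces to discrete log: two openings of the
same commitment with distinct messages reveal the discrete logarithm of `H` to
base `G`, and in particular the randomnesses must differ. -/
theorem pedersen_binding_dlog (q : ℕ) [Fact q.Prime]
    (G : Type*) [AddCommGroup G] [Module (ZMod q) G] (g h : G)
    (hg : g ≠ 0) (hh : h ≠ 0)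
    (m0 m1 r0 r1 : ZMod q)
    (heq : m0 • g + r0 • h = m1 • g + r1 • h)
    (hm : m0 ≠ m1) :
    r0 ≠ r1 ∧ h = ((m0 - m1) / (r1 - r0)) • g :=
  pedersen_binding_dlog_general q G g h hg m0 m1 r0 r1 heq hm
end

section
/- Special soundness of the opening proof π_open: given two accepting transcripts (t_1, c, (s_k), s_x) and (t_1, c', (s'_k), s'_x) with the same first message and c ≠ c', satisfying c·C + t_1 = s_x·H + Σ_k s_k·G_k and c'·C + t_1 = s'_x·H + Σ_k s'_k·G_k, the extracted values m_k = (c-c')⁻¹(s_k - s'_k) and r = (c-c')⁻¹(s_x - s'_x) satisfy C = r·H + Σ_k m_k·G_k. -/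
/-! Subtracting the two verification equations cancels `t1` and leaves
`(c - c') • C` equal to the commitment of the differences of the responses; since
`c - c'` is invertible and the commitment is linear in the opening, dividing by it
opens `C`. -/

section PedersenCommit

variable {K M ι : Type*} [Fintype ι]

def pedersenCommit [Semiring K] [AddCommMonoid M] [Module K M]
    (H : M) (G : ι → M) (r : K) (m : ι → K) : M :=
  r • H + ∑ k, m k • G k

theorem smul_pedersenCommit [Semiring K] [AddCommMonoid M] [Module K M]
    (H : M) (G : ι → M) (a r : K) (m : ι → K) :
    a • pedersenCommit H G r m = pedersenCommit H G (a * r) (a • m) := by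
  simp only [pedersenCommit, smul_add, Finset.smul_sum, smul_smul, Pi.smul_apply, smul_eq_mul]

theorem pedersenCommit_sub_pedersenCommit [Ring K] [AddCommGroup M] [Module K M]
    (H : M) (G : ι → M) (r r' : K) (m m' : ι → K) :
    pedersenCommit H G r m - pedersenCommit H G r' m' = pedersenCommit H G (r - r') (m - m') := by
  simp only [pedersenCommit, sub_smul, Pi.sub_apply, Finset.sum_sub_distrib]
  abel

end PedersenCommit

theorem eq_inv_sub_smul_sub_of_add_eq {K M : Type*} [DivisionRing K] [AddCommGroup M]
    [Module K M] {c c' : K} (hcc : c ≠ c') {C t x x' : M}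
    (hx : c • C + t = x) (hx' : c' • C + t = x') :
    C = (c - c')⁻¹ • (x - x') := by
  rw [eq_inv_smul_iff₀ (sub_ne_zero.mpr hcc), ← hx, ← hx', sub_smul]
  abel

/-- Special soundness of the opening proof `π_open`: from two accepting
transcripts with the same first message and distinct challenges, the extracted
values form a valid opening of the commitment `C`. -/
theorem pi_open_special_soundness (q : ℕ) [Fact q.Prime]
    (G : Type*) [AddCommGroup G] [Module (ZMod q) G] (n : ℕ)
    (Gv : Fin n → G) (H : G) (C t1 : G)
    (c c' : ZMod q) (hcc : c ≠ c')
    (s s' : Fin n → ZMod q) (sx sx' : ZMod q)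
    (hver : c • C + t1 = sx • H + ∑ k, s k • Gv k)
    (hver' : c' • C + t1 = sx' • H + ∑ k, s' k • Gv k) :
    C = ((c - c')⁻¹ * (sx - sx')) • H +
        ∑ k, ((c - c')⁻¹ * (s k - s' k)) • Gv k := by
  change C = pedersenCommit H Gv ((c - c')⁻¹ * (sx - sx')) ((c - c')⁻¹ • (s - s'))
  rw [← smul_pedersenCommit, ← pedersenCommit_sub_pedersenCommit]
  exact eq_inv_sub_smul_sub_of_add_eq hcc hver hver'
end

section
/- Special soundness of the issuance proof π_issue: given two accepting transcripts (t_1, t_2, c, s_1, s_3, s_4, s_5) and (t_1, t_2, c', s'_1, s'_3, s'_4, s'_5) with c ≠ c' satisfying the two verification equations, the extracted witness m_k = (c-c')⁻¹(s_k - s'_k) for k ∈ {1,3,4} and r = (c-c')⁻¹(s_5 - s'_5) satisfies C = r·H + m_1·G_1 + 0·G_2 + m_3·G_3 + m_4·G_4 and pk = m_3·G. -/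
theorem eq_inv_sub_smul_sub_of_smul_add_eq {K M : Type*} [Field K] [AddCommGroup M] [Module K M]
    {c c' : K} (hcc : c ≠ c') {x t y y' : M}
    (hy : c • x + t = y) (hy' : c' • x + t = y') :
    x = (c - c')⁻¹ • (y - y') := by
  have hdiff : (c - c') • x = y - y' := by
    rw [← hy, ← hy', sub_smul]
    abel
  rw [← hdiff, smul_smul, inv_mul_cancel₀ (sub_ne_zero.mpr hcc), one_smul]

/-- Special soundness of the issuance proof `π_issue`: two accepting transcripts
with the same first messages and distinct challenges yield an extracted witness
opening `C` (with second entry `0`) and matching the public key `pk`. -/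
theorem pi_issue_special_soundness (q : ℕ) [Fact q.Prime]
    (Grp : Type*) [AddCommGroup Grp] [Module (ZMod q) Grp]
    (G G1 G2 G3 G4 H : Grp) (C pk t1 t2 : Grp)
    (c c' : ZMod q) (hcc : c ≠ c')
    (s1 s3 s4 s5 s1' s3' s4' s5' : ZMod q)
    (hver1 : c • pk + t1 = s3 • G)
    (hver1' : c' • pk + t1 = s3' • G)
    (hver2 : c • C + t2 = s5 • H + s1 • G1 + s3 • G3 + s4 • G4)
    (hver2' : c' • C + t2 = s5' • H + s1' • G1 + s3' • G3 + s4' • G4) :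
    C = ((c - c')⁻¹ * (s5 - s5')) • H + ((c - c')⁻¹ * (s1 - s1')) • G1 +
        (0 : ZMod q) • G2 + ((c - c')⁻¹ * (s3 - s3')) • G3 +
        ((c - c')⁻¹ * (s4 - s4')) • G4 ∧
    pk = ((c - c')⁻¹ * (s3 - s3')) • G := by
  constructor
  · rw [eq_inv_sub_smul_sub_of_smul_add_eq hcc hver2 hver2']
    module
  · rw [eq_inv_sub_smul_sub_of_smul_add_eq hcc hver1 hver1']
    module
end

section
/- Special soundness of the addition proof π_add: given two accepting transcripts with the same first messages (t_1, t_2, t_3, t_4) and distinct challenges c ≠ c', the extracted values x = (s_3-s'_3)/(c-c'), r_1 = (s_4-s'_4)/(c-c'), y = (s_5-s'_5)/(c-c'), r_2 = (s_6-s'_6)/(c-c'), u = (s_1-s'_1)/(c-c'), v = (s_2-s'_2)/(c-c') satisfy C_1 = x·G + r_1·H, C_2 = y·G + r_2·H, and C_3 = u·G + v·H; moreover if additionally C_3 = C_1 + C_2 then u = x + y and v = r_1 + r_2 whenever G, H are part of a generating pair with no nontrivial relations. -/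
/-!
Subtracting the two verification equations for the same commitment cancels the first message
and leaves `(c - c') • C` as an explicit combination of `G` and `H`; dividing by the nonzero
`c - c'` gives the extracted opening. If `G, H` satisfy no nontrivial relation, openings are
unique, so the opening of `C₃ = C₁ + C₂` must be the sum of the openings of `C₁` and `C₂`.
-/

theorem eq_div_sub_smul_add_div_sub_smul_of_accepting {K M : Type*} [Field K] [AddCommGroup M]
    [Module K M] {G H C T : M} {c c' a b a' b' : K} (hcc : c ≠ c')
    (h : a • G + b • H = T + c • C) (h' : a' • G + b' • H = T + c' • C) :
    C = ((a - a') / (c - c')) • G + ((b - b') / (c - c')) • H := by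
  have hd : c - c' ≠ 0 := sub_ne_zero.mpr hcc
  have key : (c - c') • C = (a - a') • G + (b - b') • H := by
    linear_combination (norm := module) h' - h
  calc C = (c - c')⁻¹ • ((c - c') • C) := (inv_smul_smul₀ hd C).symm
    _ = _ := by rw [key]; module

/-- Special soundness of the addition proof `π_add`: two accepting transcripts
with the same first messages and distinct challenges yield extracted openings of
`C₁`, `C₂`, `C₃`; moreover, if `C₃ = C₁ + C₂` and `G, H` admit no nontrivial
discrete-log relation, the opening of `C₃` is the sum of the openings. -/
theorem pi_add_special_soundness (q : ℕ) [Fact q.Prime]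
    (Grp : Type*) [AddCommGroup Grp] [Module (ZMod q) Grp]
    (G H : Grp) (C1 C2 C3 t1 t2 t3 t4 : Grp)
    (c c' : ZMod q) (hcc : c ≠ c')
    (s1 s2 s3 s4 s5 s6 s1' s2' s3' s4' s5' s6' : ZMod q)
    (hv1 : s3 • G + s4 • H = t3 + c • C1)
    (hv1' : s3' • G + s4' • H = t3 + c' • C1)
    (hv2 : s5 • G + s6 • H = t4 + c • C2)
    (hv2' : s5' • G + s6' • H = t4 + c' • C2)
    (hv3 : s1 • G + s2 • H = (t1 + t2) + c • C3)
    (hv3' : s1' • G + s2' • H = (t1 + t2) + c' • C3) :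
    C1 = ((s3 - s3') / (c - c')) • G + ((s4 - s4') / (c - c')) • H ∧
    C2 = ((s5 - s5') / (c - c')) • G + ((s6 - s6') / (c - c')) • H ∧
    C3 = ((s1 - s1') / (c - c')) • G + ((s2 - s2') / (c - c')) • H ∧
    ((∀ a b : ZMod q, a • G + b • H = 0 → a = 0 ∧ b = 0) → C3 = C1 + C2 →
      (s1 - s1') / (c - c') = (s3 - s3') / (c - c') + (s5 - s5') / (c - c') ∧
      (s2 - s2') / (c - c') = (s4 - s4') / (c - c') + (s6 - s6') / (c - c')) := by
  have h1 := eq_div_sub_smul_add_div_sub_smul_of_accepting hcc hv1 hv1'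
  have h2 := eq_div_sub_smul_add_div_sub_smul_of_accepting hcc hv2 hv2'
  have h3 := eq_div_sub_smul_add_div_sub_smul_of_accepting hcc hv3 hv3'
  refine ⟨h1, h2, h3, fun hnt hsum => (LinearIndependent.pair_iff.mpr hnt).eq_of_pair ?_⟩
  rw [← h3, hsum, h1, h2]
  module
end

section
/- Special soundness of the multiplication proof π_mul: given two accepting transcripts with common first messages (t_1, t_2, t_3) and challenges c ≠ c', the extracted values x = (s_1−s'_1)/(c−c'), r_1 = (s_2−s'_2)/(c−c'), y = (s_3−s'_3)/(c−c'), r_2 = (s_4−s'_4)/(c−c'), e = (s_5−s'_5)/(c−c') satisfy C_1 = x·G + r_1·H, C_2 = y·G + r_2·H, and C_3 = y·C_1 + e·H = (x·y)·G + (r_1·y + e)·H; in particular C_3 commits to the product x·y with randomness r_3 = r_1·y + e. -/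
/-!
Subtracting the two verification equations of each proof eliminates the common first message,
leaving `(c - c') • C = Δs • P + Δs' • Q`; dividing by `c - c' ≠ 0` opens `C`. Substituting the
opening of `C₁` into that of `C₃` then exhibits `C₃` as a commitment to `x * y`.
-/

section SpecialSoundness

variable {K V : Type*} [Field K] [AddCommGroup V] [Module K V]

theorem sub_smul_eq_of_transcripts {P Q C t : V} {c c' u u' v v' : K}
    (h : u • P + v • Q = t + c • C) (h' : u' • P + v' • Q = t + c' • C) :
    (c - c') • C = (u - u') • P + (v - v') • Q := by
  linear_combination (norm := module) h' - h

theorem eq_opening_of_transcripts {P Q C t : V} {c c' u u' v v' : K} (hc : c ≠ c')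
    (h : u • P + v • Q = t + c • C) (h' : u' • P + v' • Q = t + c' • C) :
    C = ((u - u') / (c - c')) • P + ((v - v') / (c - c')) • Q := by
  have hd : c - c' ≠ 0 := sub_ne_zero.2 hc
  calc C = (c - c')⁻¹ • ((c - c') • C) := (inv_smul_smul₀ hd C).symm
    _ = _ := by
      rw [sub_smul_eq_of_transcripts h h', smul_add, smul_smul, smul_smul,
        div_eq_inv_mul, div_eq_inv_mul]

end SpecialSoundness

/-- Special soundness of the multiplication proof `π_mul`: two accepting
transcripts with common first messages and distinct challenges yield extracted
openings of `C₁`, `C₂`, and `C₃`, and `C₃` commits to the product `x·y` with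
randomness `r₁·y + e`. -/
theorem pi_mul_special_soundness (q : ℕ) [Fact q.Prime]
    (Grp : Type*) [AddCommGroup Grp] [Module (ZMod q) Grp]
    (G H : Grp) (C1 C2 C3 t1 t2 t3 : Grp)
    (c c' : ZMod q) (hcc : c ≠ c')
    (s1 s2 s3 s4 s5 s1' s2' s3' s4' s5' : ZMod q)
    (hv1 : s1 • G + s2 • H = t1 + c • C1)
    (hv1' : s1' • G + s2' • H = t1 + c' • C1)
    (hv2 : s3 • G + s4 • H = t2 + c • C2)
    (hv2' : s3' • G + s4' • H = t2 + c' • C2)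
    (hv3 : s3 • C1 + s5 • H = t3 + c • C3)
    (hv3' : s3' • C1 + s5' • H = t3 + c' • C3) :
    C1 = ((s1 - s1') / (c - c')) • G + ((s2 - s2') / (c - c')) • H ∧
    C2 = ((s3 - s3') / (c - c')) • G + ((s4 - s4') / (c - c')) • H ∧
    C3 = ((s3 - s3') / (c - c')) • C1 + ((s5 - s5') / (c - c')) • H ∧
    C3 = (((s1 - s1') / (c - c')) * ((s3 - s3') / (c - c'))) • G +
         (((s2 - s2') / (c - c')) * ((s3 - s3') / (c - c')) +
           (s5 - s5') / (c - c')) • H := by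
  have hC1 := eq_opening_of_transcripts hcc hv1 hv1'
  have hC3 := eq_opening_of_transcripts hcc hv3 hv3'
  refine ⟨hC1, eq_opening_of_transcripts hcc hv2 hv2', hC3, ?_⟩
  rw [hC3, hC1]
  module
end

section
/- Blinded Pedersen commitments preserve binding: if (z^γ, C^γ) = (z^{γ'}, C'^{γ'}) where z ≠ 1 is an element of a group of prime order q, γ, γ' ∈ Z_q are nonzero, and C = Comm(m, r), C' = Comm(m', r') are Pedersen commitments, then γ = γ' and C = C'; hence any opening of the blinded commitment to distinct message vectors yields a breach of binding of the underlying Pedersen commitment. -/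
/-! Since `|G| = q` is prime, `z ≠ 1` has order exactly `q`, so `γ ↦ z ^ γ.val` is injective on
`ZMod q` and the first components force `γ = γ'`. A nonzero `γ` is then a unit mod `q`, i.e.
coprime to `|G|`, so `C ↦ C ^ γ.val` is a bijection of `G` and the second components force
`C = C'`. -/

theorem injective_pow_val_of_orderOf_eq {M : Type*} [Monoid M] {n : ℕ} [NeZero n] {x : M}
    (hx : orderOf x = n) : Function.Injective fun a : ZMod n => x ^ a.val := by
  intro a b (hab : x ^ a.val = x ^ b.val)
  rw [← ZMod.natCast_zmod_val a, ← ZMod.natCast_zmod_val b, ZMod.natCast_eq_natCast_iff]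
  have hfin : IsOfFinOrder x := orderOf_pos_iff.mp (hx ▸ NeZero.pos n)
  simpa only [hx] using hfin.pow_eq_pow_iff_modEq.mp hab

theorem injective_pow_val_of_card_eq_prime {G : Type*} [Group G] {p : ℕ} [Fact p.Prime]
    (hcard : Nat.card G = p) {a : ZMod p} (ha : a ≠ 0) :
    Function.Injective fun x : G => x ^ a.val :=
  have hcop : (Nat.card G).Coprime a.val :=
    hcard ▸ (ZMod.val_coe_unit_coprime (Units.mk0 a ha)).symm
  (powCoprime hcop).injective

theorem blinded_pedersen_binding_general (q : ℕ) [Fact q.Prime]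
    (G : Type*) [CommGroup G] [Fintype G] (hcard : Fintype.card G = q)
    (z : G) (hz : z ≠ 1)
    (γ γ' : ZMod q) (hγ : γ ≠ 0)
    (C C' : G)
    (heq : (z ^ γ.val, C ^ γ.val) = (z ^ γ'.val, C' ^ γ'.val)) :
    γ = γ' ∧ C = C' := by
  obtain ⟨hzγ, hCγ⟩ := Prod.mk.inj heq
  have hord : orderOf z = q := orderOf_eq_prime (hcard ▸ pow_card_eq_one) hz
  obtain rfl : γ = γ' := injective_pow_val_of_orderOf_eq hord hzγ
  exact ⟨rfl, injective_pow_val_of_card_eq_prime (Nat.card_eq_fintype_card.trans hcard) hγ hCγ⟩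

/-- Blinded Pedersen commitments preserve binding: in a (multiplicative) cyclic
group of prime order `q`, if the blinded commitments `(z^γ, C^γ)` and
`(z^γ', C'^γ')` coincide, where `z ≠ 1`, the blinding exponents `γ, γ'` are
nonzero, and `C, C'` are Pedersen commitments `Comm(m, r) = g^m · h^r`, then
`γ = γ'` and `C = C'`. -/
theorem blinded_pedersen_binding (q : ℕ) [Fact q.Prime]
    (G : Type*) [CommGroup G] [Fintype G] (hcard : Fintype.card G = q)
    (g h z : G) (hz : z ≠ 1)
    (γ γ' : ZMod q) (hγ : γ ≠ 0) (hγ' : γ' ≠ 0)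
    (m r m' r' : ZMod q) (C C' : G)
    (hC : C = g ^ m.val * h ^ r.val)
    (hC' : C' = g ^ m'.val * h ^ r'.val)
    (heq : (z ^ γ.val, C ^ γ.val) = (z ^ γ'.val, C' ^ γ'.val)) :
    γ = γ' ∧ C = C' :=
  blinded_pedersen_binding_general q G hcard z hz γ γ' hγ C C' heq
end
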